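/- arXiv:2604.05607 — 2 statements merged into one kernel-verified Lean document; each statement's English description precedes it below -/
import Mathlib

section
/- Transfer lemma: for all integers n ≥ 1, t ≥ 1, s ≥ 2 and every k with 0 ≤ k ≤ n, one has binom(n,k) · α_s(H_{2t}(n)) ≤ 2^n · α_s(L_k), where L_k is the subgraph of H_{2t}(n) induced on the k-th layer. -/
/-!
Translations `x ↦ x + z` of `(ℤ/2)^n` are automorphisms of `H_r(n)`. For a `K_s`-free set `S`,
translating `S ∩ (z + L_k)` back by `z` gives a `K_s`-free subset of `L_k`, so it has at most
`α_s(L_k)` elements. Every vertex lies in exactly `C(n,k)` of the translates `z + L_k`, so summing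
over all `2^n` translations gives `C(n,k) |S| ≤ 2^n α_s(L_k)`.
-/

open Finset

/-- The `r`-distance graph on the Boolean cube `{0,1}^n`: two vertices are adjacent
iff their Hamming distance equals `r`. -/
def cubeGraph (n r : ℕ) : SimpleGraph (Fin n → Bool) where
  Adj x y := x ≠ y ∧ hammingDist x y = r
  symm := by
    constructor
    rintro x y ⟨hne, hd⟩
    exact ⟨hne.symm, by rwa [hammingDist_comm]⟩
  loopless := by constructor; rintro x ⟨hne, -⟩; exact hne rfl

/-- `S` is `K_s`-free in `G`: it contains no `s` pairwise adjacent vertices. -/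
def IsKFree {V : Type*} (G : SimpleGraph V) (s : ℕ) (S : Finset V) : Prop :=
  ¬ ∃ T : Finset V, T ⊆ S ∧ T.card = s ∧ ∀ x ∈ T, ∀ y ∈ T, x ≠ y → G.Adj x y

/-- The `s`-independence number: the maximum size of a `K_s`-free vertex subset. -/
noncomputable def alphaS {V : Type*} [Fintype V] (G : SimpleGraph V) (s : ℕ) : ℕ :=
  sSup {m | ∃ S : Finset V, IsKFree G s S ∧ S.card = m}

/-- The Hamming weight (number of `true` coordinates) of a vertex of the cube. -/
def wt {n : ℕ} (x : Fin n → Bool) : ℕ := (univ.filter fun i => x i = true).card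

/-- The subgraph of `cubeGraph n r` induced on the `k`-th layer. -/
def layerGraph (n r k : ℕ) : SimpleGraph {x : Fin n → Bool // wt x = k} :=
  SimpleGraph.induce {x : Fin n → Bool | wt x = k} (cubeGraph n r)

open SimpleGraph

section alphaS

variable {V : Type*} [Fintype V] (G : SimpleGraph V)

lemma bddAbove_card_isKFree (s : ℕ) : BddAbove {m | ∃ S : Finset V, IsKFree G s S ∧ #S = m} :=
  ⟨Fintype.card V, by rintro m ⟨S, -, rfl⟩; exact S.card_le_univ⟩

lemma card_le_alphaS {s : ℕ} {S : Finset V} (hS : IsKFree G s S) : #S ≤ alphaS G s :=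
  le_csSup (bddAbove_card_isKFree G s) ⟨S, hS, rfl⟩

lemma alphaS_zero : alphaS G 0 = 0 := by
  have hempty : {m | ∃ S : Finset V, IsKFree G 0 S ∧ #S = m} = ∅ := by
    refine Set.eq_empty_of_forall_notMem ?_
    rintro _ ⟨_, hS, -⟩
    exact hS ⟨∅, empty_subset _, card_empty, by simp⟩
  rw [alphaS, hempty, csSup_empty, bot_eq_zero]

lemma exists_isKFree_card_eq_alphaS {s : ℕ} (hs : s ≠ 0) :
    ∃ S : Finset V, IsKFree G s S ∧ #S = alphaS G s := by
  have hempty : IsKFree G s ∅ := by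
    rintro ⟨T, hT, hTcard, -⟩
    rw [subset_empty.mp hT, card_empty] at hTcard
    exact hs hTcard.symm
  exact Nat.sSup_mem (s := {m | ∃ S : Finset V, IsKFree G s S ∧ #S = m}) ⟨0, ∅, hempty, card_empty⟩
    (bddAbove_card_isKFree G s)

end alphaS

lemma IsKFree.preimage {V W : Type*} {G : SimpleGraph V} {H : SimpleGraph W} (f : H ↪g G)
    {s : ℕ} {S : Finset V} (hS : IsKFree G s S) :
    IsKFree H s (S.preimage f f.injective.injOn) := by
  rintro ⟨T, hTS, hTcard, hTclique⟩
  refine hS ⟨T.map f.toEmbedding, ?_, by rw [card_map, hTcard], ?_⟩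
  · simpa [map_subset_iff_subset_preimage] using hTS
  · simp only [mem_map]
    rintro _ ⟨x, hx, rfl⟩ _ ⟨y, hy, rfl⟩ hxy
    exact f.map_rel_iff.mpr (hTclique x hx y hy (ne_of_apply_ne _ hxy))

namespace cubeGraph

variable {n : ℕ}

def xorPerm (z : Fin n → Bool) : Equiv.Perm (Fin n → Bool) :=
  Function.Involutive.toPerm (fun x i => xor (z i) (x i)) fun x => by simp

lemma xorPerm_apply (z x : Fin n → Bool) : xorPerm z x = fun i => xor (z i) (x i) := rfl

lemma xorPerm_xorPerm (z x : Fin n → Bool) : xorPerm z (xorPerm z x) = x := by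
  simp [xorPerm_apply]

lemma xorPerm_comm (z x : Fin n → Bool) : xorPerm z x = xorPerm x z := by
  simp [xorPerm_apply, Bool.xor_comm]

lemma hammingDist_xorPerm (z x y : Fin n → Bool) :
    hammingDist (xorPerm z x) (xorPerm z y) = hammingDist x y :=
  hammingDist_comp (fun i => xor (z i)) fun _ _ _ => Bool.xor_right_inj.mp

def xorIso (r : ℕ) (z : Fin n → Bool) : cubeGraph n r ≃g cubeGraph n r where
  toEquiv := xorPerm z
  map_rel_iff' {x y} := by
    change xorPerm z x ≠ xorPerm z y ∧ _ ↔ x ≠ y ∧ _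
    rw [(xorPerm z).injective.ne_iff, hammingDist_xorPerm]

lemma card_filter_wt_eq (k : ℕ) : #{x : Fin n → Bool | wt x = k} = n.choose k := by
  have hchoose : n.choose k = #(powersetCard k (univ : Finset (Fin n))) := by simp
  rw [hchoose]
  refine card_nbij' (fun x => ({i | x i = true} : Finset (Fin n))) (fun t i => decide (i ∈ t))
    ?_ ?_ ?_ ?_
  · intro x hx
    rw [mem_coe, mem_filter] at hx
    simpa [wt] using hx.2
  · intro t ht
    rw [mem_coe, mem_filter]
    simpa [wt] using ht
  · intro x _
    ext i
    simp
  · intro t _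
    ext i
    simp

lemma card_filter_wt_xorPerm_eq (k : ℕ) (y : Fin n → Bool) :
    #{z | wt (xorPerm z y) = k} = n.choose k := by
  simp_rw [xorPerm_comm _ y, card_filter,
    Equiv.sum_comp (xorPerm y) fun x => if wt x = k then 1 else 0]
  rw [← card_filter, card_filter_wt_eq]

lemma sum_card_filter_wt_xorPerm (k : ℕ) (S : Finset (Fin n → Bool)) :
    ∑ z, #{y ∈ S | wt (xorPerm z y) = k} = n.choose k * #S := by
  simp_rw [card_filter]
  rw [sum_comm]
  simp_rw [← card_filter, card_filter_wt_xorPerm_eq, sum_const, smul_eq_mul, mul_comm]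

lemma card_filter_wt_xorPerm_le_alphaS {r s k : ℕ} {S : Finset (Fin n → Bool)}
    (hS : IsKFree (cubeGraph n r) s S) (z : Fin n → Bool) :
    #{y ∈ S | wt (xorPerm z y) = k} ≤ alphaS (layerGraph n r k) s := by
  classical
  let f : layerGraph n r k ↪g cubeGraph n r := (xorIso r z).toEmbedding.comp (Embedding.induce _)
  have hf (x) : f x = xorPerm z x.1 := rfl
  have hrange (y : Fin n → Bool) : y ∈ Set.range f ↔ wt (xorPerm z y) = k :=
    ⟨by rintro ⟨x, rfl⟩; simpa [hf, xorPerm_xorPerm] using x.2,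
     fun hy => ⟨⟨xorPerm z y, hy⟩, by simp [hf, xorPerm_xorPerm]⟩⟩
  calc #{y ∈ S | wt (xorPerm z y) = k} = #(S.preimage f f.injective.injOn) := by
        rw [card_preimage]; simp_rw [hrange]
    _ ≤ alphaS (layerGraph n r k) s := card_le_alphaS _ (hS.preimage f)

theorem choose_mul_card_le_of_isKFree {r s k : ℕ} {S : Finset (Fin n → Bool)}
    (hS : IsKFree (cubeGraph n r) s S) :
    n.choose k * #S ≤ 2 ^ n * alphaS (layerGraph n r k) s := by
  calc n.choose k * #S = ∑ z, #{y ∈ S | wt (xorPerm z y) = k} :=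
        (sum_card_filter_wt_xorPerm k S).symm
    _ ≤ ∑ _z : Fin n → Bool, alphaS (layerGraph n r k) s :=
        sum_le_sum fun z _ => card_filter_wt_xorPerm_le_alphaS hS z
    _ = 2 ^ n * alphaS (layerGraph n r k) s := by simp

end cubeGraph

theorem stmt7_general (n t s k : ℕ) :
    Nat.choose n k * alphaS (cubeGraph n (2 * t)) s ≤
      2 ^ n * alphaS (layerGraph n (2 * t) k) s := by
  rcases eq_or_ne s 0 with rfl | hs
  · simp [alphaS_zero]
  obtain ⟨S, hS, hScard⟩ := exists_isKFree_card_eq_alphaS (cubeGraph n (2 * t)) hs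
  rw [← hScard]
  exact cubeGraph.choose_mul_card_le_of_isKFree hS

/-- **Transfer lemma.** For all `n ≥ 1`, `t ≥ 1`, `s ≥ 2` and `0 ≤ k ≤ n`,
`C(n,k) · α_s(H_{2t}(n)) ≤ 2^n · α_s(L_k)`. -/
theorem stmt7 (n t s k : ℕ) (hn : 1 ≤ n) (ht : 1 ≤ t) (hs : 2 ≤ s) (hk : k ≤ n) :
    Nat.choose n k * alphaS (cubeGraph n (2 * t)) s ≤
      2 ^ n * alphaS (layerGraph n (2 * t) k) s :=
  stmt7_general n t s k
end

section
/- Let t ≥ 1 and m ≥ 1 be integers and suppose n = 2^m or n = 2^m − 1 (with n ≥ 1). Then there exists a partition of {0,1}^n into at most 2^{t·m} parts such that every part is an independent set of H_{2t}(n) and all parts have the same cardinality. -/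
open Finset

/-!
Number the coordinates by distinct elements `e i` of `𝔽_{2^m}` and send a word `x` to the
syndrome `(∑_{x i} e i ^ (2j+1))_{j<t}` of the binary BCH code with locators `e`. This map is
additive for the xor structure of the cube, so its fibres are cosets of its kernel: they have
equal size, and there are at most `2^{tm}` of them. If two words of one fibre differ on a set `S`
with `2 ≤ |S| ≤ 2t`, the odd power sums of `e(S)` vanish; since `∑ a^{2l} = (∑ a^l)^2` in
characteristic `2`, so do all power sums of exponent at most `2t`, which a Vandermonde determinant
forbids for a set of at most `2t` field elements of which at most one is zero.
-/

section PowerSums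

variable {F : Type*} [Field F]

theorem Finset.exists_sum_pow_ne_zero (A : Finset F) (hA : A.Nonempty) (h0 : (0 : F) ∉ A) :
    ∃ j, 1 ≤ j ∧ j ≤ #A ∧ ∑ a ∈ A, a ^ j ≠ 0 := by
  by_contra! hsum
  let v : Fin #A → F := fun k => A.equivFin.symm k
  have hv : Function.Injective v := fun k l h => A.equivFin.symm.injective (Subtype.ext h)
  let M : Matrix (Fin #A) (Fin #A) F := Matrix.of fun j k => v k ^ ((j : ℕ) + 1)
  have hMT : M.transpose = Matrix.diagonal v * Matrix.vandermonde v := by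
    ext k j
    simp [M, Matrix.vandermonde, pow_succ']
  have hdet : M.det ≠ 0 := by
    rw [← Matrix.det_transpose, hMT, Matrix.det_mul, Matrix.det_diagonal]
    exact mul_ne_zero (prod_ne_zero_iff.2 fun k _ h => h0 (h ▸ (A.equivFin.symm k).2))
      (Matrix.det_vandermonde_ne_zero_iff.2 hv)
  have hker : M.mulVec (fun _ => 1) = 0 := by
    funext j
    have hsum_v : ∑ k, v k ^ ((j : ℕ) + 1) = ∑ a ∈ A, a ^ ((j : ℕ) + 1) := by
      rw [← sum_attach A]
      exact Fintype.sum_equiv A.equivFin.symm _ _ fun k => rfl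
    simpa [M, Matrix.mulVec, dotProduct, hsum_v] using hsum _ (by omega) j.isLt
  exact one_ne_zero (congrFun (Matrix.eq_zero_of_mulVec_eq_zero hdet hker) ⟨0, card_pos.2 hA⟩)

theorem Finset.card_le_one_of_sum_pow_eq_zero (B : Finset F)
    (hB : ∀ j, 1 ≤ j → j ≤ #B → ∑ b ∈ B, b ^ j = 0) : #B ≤ 1 := by
  classical
  by_contra! hB2
  have hsum_erase (j : ℕ) (hj : 1 ≤ j) : ∑ b ∈ B.erase 0, b ^ j = ∑ b ∈ B, b ^ j :=
    sum_erase B (zero_pow (by omega))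
  have hne : (B.erase 0).Nonempty := by
    have := pred_card_le_card_erase (s := B) (a := 0)
    exact card_pos.1 (by omega)
  obtain ⟨j, hj1, hj, hsum⟩ := (B.erase 0).exists_sum_pow_ne_zero hne (notMem_erase 0 B)
  exact hsum ((hsum_erase j hj1).trans (hB j hj1 (hj.trans card_erase_le)))

end PowerSums

theorem CharTwo.sum_pow_eq_zero_of_sum_odd_pow_eq_zero {R ι : Type*} [CommSemiring R] [CharP R 2]
    {s : Finset ι} {f : ι → R} {t : ℕ} (h : ∀ l < t, ∑ i ∈ s, f i ^ (2 * l + 1) = 0) :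
    ∀ j, 1 ≤ j → j ≤ 2 * t → ∑ i ∈ s, f i ^ j = 0 := by
  intro j
  induction j using Nat.strong_induction_on with
  | _ j ih =>
    intro hj1 hj2
    rcases Nat.even_or_odd' j with ⟨l, rfl | rfl⟩
    · have hl := ih l (by omega) (by omega) (by omega)
      simp_rw [pow_mul', ← CharTwo.sum_sq, hl, zero_pow two_ne_zero]
    · exact h l (by omega)

section Syndrome

variable {ι F : Type*} [Fintype ι]

def bchSyndrome [CommRing F] [CharP F 2] (e : ι → F) (t : ℕ) :
    (ι → Bool) →+ (Fin t → F) where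
  toFun x j := ∑ i with x i, e i ^ (2 * (j : ℕ) + 1)
  map_zero' := by ext; simp
  map_add' x y := by
    ext j
    simp only [Pi.add_apply, sum_filter, ← sum_add_distrib]
    refine sum_congr rfl fun i _ => ?_
    cases x i <;> cases y i <;> simp [Bool.add_eq_xor, CharTwo.add_self_eq_zero]

theorem lt_hammingNorm_of_bchSyndrome_eq_zero [Field F] [CharP F 2] {e : ι → F}
    (he : Function.Injective e) {t : ℕ} {d : ι → Bool} (hd : bchSyndrome e t d = 0)
    (h2 : 2 ≤ hammingNorm d) : 2 * t < hammingNorm d := by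
  classical
  by_contra! hle
  let S : Finset ι := {i | d i}
  have hSd : #S = hammingNorm d := by simp [S, hammingNorm, Bool.zero_eq_false]
  have hodd : ∀ l < t, ∑ i ∈ S, e i ^ (2 * l + 1) = 0 := fun l hl => congrFun hd ⟨l, hl⟩
  have himage : #(S.image e) = #S := card_image_of_injective S he
  refine absurd ((S.image e).card_le_one_of_sum_pow_eq_zero fun j hj1 hj => ?_) (by omega)
  rw [sum_image he.injOn]
  exact CharTwo.sum_pow_eq_zero_of_sum_odd_pow_eq_zero hodd j hj1 (by omega)

theorem not_adj_of_bchSyndrome_eq [Field F] [CharP F 2] {n : ℕ} {e : Fin n → F}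
    (he : Function.Injective e) {t : ℕ} {x y : Fin n → Bool}
    (hxy : bchSyndrome e t x = bchSyndrome e t y) : ¬ (cubeGraph n (2 * t)).Adj x y := by
  rintro ⟨hne, hdist⟩
  rw [hammingDist_eq_hammingNorm] at hdist
  have hd : bchSyndrome e t (-x + y) = 0 := by rw [map_add, map_neg, hxy, neg_add_cancel]
  have ht : t ≠ 0 := by
    rintro rfl
    exact hne (hammingDist_eq_zero.1 (by rwa [hammingDist_eq_hammingNorm]))
  have := lt_hammingNorm_of_bchSyndrome_eq_zero he hd (by omega)
  omega

end Syndrome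

namespace Finpartition

variable {α β : Type*} [Fintype α] [DecidableEq α]

theorem rel_of_mem_ofSetoid {s : Setoid α} [DecidableRel s.r] {p : Finset α}
    (hp : p ∈ (ofSetoid s).parts) {a b : α} (ha : a ∈ p) (hb : b ∈ p) : s a b := by
  rw [← mem_part_ofSetoid_iff_rel, part_eq_of_mem _ hp ha]
  exact hb

variable {f : α → β} [DecidableRel (Setoid.ker f)]

theorem exists_mem_iff_of_mem_ofSetoid_ker {p : Finset α}
    (hp : p ∈ (ofSetoid (Setoid.ker f)).parts) : ∃ a, ∀ b, b ∈ p ↔ f b = f a := by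
  obtain ⟨a, -, rfl⟩ := mem_image.1 hp
  exact ⟨a, fun b => by simp [eq_comm]⟩

theorem card_parts_ofSetoid_ker_le [Fintype β] :
    #(ofSetoid (Setoid.ker f)).parts ≤ Fintype.card β := by
  classical
  have hsurj : Set.SurjOn (fun c => ({b | f b = c} : Finset α)) (univ : Finset β)
      (ofSetoid (Setoid.ker f)).parts := by
    intro p hp
    obtain ⟨a, ha⟩ := exists_mem_iff_of_mem_ofSetoid_ker hp
    exact ⟨f a, mem_coe.2 (mem_univ _), by ext; simp [ha]⟩
  exact card_le_card_of_surjOn _ hsurj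

end Finpartition

theorem AddMonoidHom.card_eq_of_mem_ofSetoid_ker {G H : Type*} [AddGroup G] [Fintype G]
    [DecidableEq G] [AddMonoid H] (f : G →+ H) [DecidableRel (Setoid.ker f)] {p q : Finset G}
    (hp : p ∈ (Finpartition.ofSetoid (Setoid.ker f)).parts)
    (hq : q ∈ (Finpartition.ofSetoid (Setoid.ker f)).parts) : #p = #q := by
  classical
  obtain ⟨a, ha⟩ := Finpartition.exists_mem_iff_of_mem_ofSetoid_ker hp
  obtain ⟨b, hb⟩ := Finpartition.exists_mem_iff_of_mem_ofSetoid_ker hq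
  rw [show p = ({g | f g = f a} : Finset G) by ext; simp [ha],
    show q = ({g | f g = f b} : Finset G) by ext; simp [hb]]
  convert card_fiber_eq_of_mem_range f ⟨a, rfl⟩ ⟨b, rfl⟩

theorem exists_equicardinal_independent_partition_cubeGraph {F : Type*} [Field F] [Fintype F]
    [CharP F 2] {n : ℕ} (e : Fin n ↪ F) (t : ℕ) :
    ∃ P : Finpartition (univ : Finset (Fin n → Bool)),
      #P.parts ≤ Fintype.card F ^ t ∧
      (∀ p ∈ P.parts, ∀ x ∈ p, ∀ y ∈ p, ¬ (cubeGraph n (2 * t)).Adj x y) ∧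
      (∀ p ∈ P.parts, ∀ q ∈ P.parts, #p = #q) := by
  classical
  refine ⟨Finpartition.ofSetoid (Setoid.ker (bchSyndrome e t)), ?_, ?_, ?_⟩
  · refine Finpartition.card_parts_ofSetoid_ker_le.trans_eq ?_
    rw [Fintype.card_fun, Fintype.card_fin]
  · exact fun p hp x hx y hy =>
      not_adj_of_bchSyndrome_eq e.injective (Finpartition.rel_of_mem_ofSetoid hp hx hy)
  · exact fun p hp q hq => AddMonoidHom.card_eq_of_mem_ofSetoid_ker _ hp hq

theorem stmt14_general (n t m : ℕ) (hm : 1 ≤ m)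
    (hnm : n = 2 ^ m ∨ n = 2 ^ m - 1) :
    ∃ P : Finpartition (Finset.univ : Finset (Fin n → Bool)),
      P.parts.card ≤ 2 ^ (t * m) ∧
      (∀ p ∈ P.parts, ∀ x ∈ p, ∀ y ∈ p, ¬ (cubeGraph n (2 * t)).Adj x y) ∧
      (∀ p ∈ P.parts, ∀ q ∈ P.parts, p.card = q.card) := by
  let : Fintype (GaloisField 2 m) := Fintype.ofFinite _
  have hcard : Fintype.card (GaloisField 2 m) = 2 ^ m := by
    rw [← Nat.card_eq_fintype_card, GaloisField.card 2 m (by omega)]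
  obtain ⟨e⟩ : Nonempty (Fin n ↪ GaloisField 2 m) :=
    Function.Embedding.nonempty_of_card_le (by rw [hcard, Fintype.card_fin]; omega)
  rw [mul_comm, pow_mul, ← hcard]
  exact exists_equicardinal_independent_partition_cubeGraph e t

/-- **Proposition.** If `n = 2^m` or `n = 2^m − 1` (with `n ≥ 1`), then `{0,1}^n`
can be partitioned into at most `2^{t·m}` parts, each an independent set of
`H_{2t}(n)`, all of the same cardinality. -/
theorem stmt14 (n t m : ℕ) (hn : 1 ≤ n) (ht : 1 ≤ t) (hm : 1 ≤ m)
    (hnm : n = 2 ^ m ∨ n = 2 ^ m - 1) :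
    ∃ P : Finpartition (Finset.univ : Finset (Fin n → Bool)),
      P.parts.card ≤ 2 ^ (t * m) ∧
      (∀ p ∈ P.parts, ∀ x ∈ p, ∀ y ∈ p, ¬ (cubeGraph n (2 * t)).Adj x y) ∧
      (∀ p ∈ P.parts, ∀ q ∈ P.parts, p.card = q.card) :=
  stmt14_general n t m hm hnm
end
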